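/- Let V, W ∈ Gr₂(n,k), let H_B and H_C be finite-dimensional complex Hilbert spaces, let {C_z^V}_{z ∈ CS(V^⊥)} be a PVM on H_C and {B_x^W}_{x ∈ CS(W)} a PVM on H_B. Define the operators on (ℂ²)^{⊗n} ⊗ H_B ⊗ H_C: P^V = ∑_{x ∈ CS(V), z ∈ CS(V^⊥)} |V_{x,z}⟩⟨V_{x,z}| ⊗ Id_B ⊗ C_z^V and Q^W = ∑_{x ∈ CS(W), z ∈ CS(W^⊥)} |W_{x,z}⟩⟨W_{x,z}| ⊗ B_x^W ⊗ Id_C. Then ‖P^V Q^W‖ ≤ √(2^{dim(V ∩ W) − k}). -/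

import Mathlib

/-!
Summing the coset states over `z` gives `Q^W = ∑ₓ Πₓ ⊗ Bₓ ⊗ 1`, where `Πₓ` is the projection
onto the span of the coset `x + W`; summing over `x` gives `P^V = 2^{-k} ∑_{t ∈ V} ρ(t)` with
`ρ(t) = X^t ⊗ 1 ⊗ ∑_z (-1)^{z·t} C_z`. Since `ρ` is a unitary representation of `V`, `P^V` is a
projection, so `‖P^V Q^W‖² = ‖Q^W P^V Q^W‖ ≤ 2^{-k} ∑_{t ∈ V} ‖Q^W ρ(t) Q^W‖`. The translation
`X^t` moves `x + W` to `x + t + W`, so `Q^W ρ(t) Q^W = 0` unless `t ∈ V ∩ W`, and the remaining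
`2^{dim(V ∩ W)}` terms have norm at most `1`.
-/

open scoped Classical Kronecker Matrix.Norms.L2Operator

/-- The coset state `|W_{x,z}⟩ = 2^{-k/2} ∑_{u ∈ W} (-1)^{z·u} |x+u⟩` in `(ℂ²)^{⊗n}`,
written as a vector of coordinates in the computational basis `{|v⟩ : v ∈ 𝔽₂ⁿ}`. -/
noncomputable def cosetVec {n : ℕ} (W : Submodule (ZMod 2) (Fin n → ZMod 2))
    (x z : Fin n → ZMod 2) : (Fin n → ZMod 2) → ℂ :=
  (((Real.sqrt 2 : ℝ) : ℂ) ^ (Module.finrank (ZMod 2) W))⁻¹ •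
    ∑ u : W, ((-1 : ℂ) ^ (dotProduct z (u : Fin n → ZMod 2)).val) •
      (Pi.single (x + (u : Fin n → ZMod 2)) (1 : ℂ) : (Fin n → ZMod 2) → ℂ)

/-- The rank-one operator `|ψ⟩⟨φ|`, as a matrix in the computational basis. -/
noncomputable def outerMat {ι : Type*} (ψ φ : ι → ℂ) : Matrix ι ι ℂ :=
  Matrix.of fun i j => ψ i * (starRingEnd ℂ) (φ j)

/-- The dual space `W^⊥ = {y ∈ 𝔽₂ⁿ : x·y = 0 for all x ∈ W}` with respect to the standard
bilinear form `x·y = ∑ᵢ xᵢyᵢ`. -/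
def dualSpace {n : ℕ} (W : Submodule (ZMod 2) (Fin n → ZMod 2)) :
    Submodule (ZMod 2) (Fin n → ZMod 2) where
  carrier := {y | ∀ x ∈ W, dotProduct x y = 0}
  add_mem' := by
    intro a b ha hb x hx
    simp [dotProduct_add, ha x hx, hb x hx]
  zero_mem' := by
    intro x hx
    simp
  smul_mem' := by
    intro c a ha x hx
    simp [dotProduct_smul, ha x hx]

/-- `T` is a set of coset representatives of the subspace `W` in `𝔽₂ⁿ`: it contains exactly
one vector from each coset of `W`. -/
def IsCosetReps {n : ℕ} (W : Submodule (ZMod 2) (Fin n → ZMod 2))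
    (T : Set (Fin n → ZMod 2)) : Prop :=
  ∀ v : Fin n → ZMod 2, ∃! x, x ∈ T ∧ v - x ∈ W

/-- A PVM (projection-valued measure) on a finite-dimensional Hilbert space, in matrix form:
a finite family of orthogonal projections, mutually orthogonal, summing to the identity. -/
def IsPVM {ι X : Type*} [Fintype ι] [DecidableEq ι] [Fintype X] (P : X → Matrix ι ι ℂ) :
    Prop :=
  (∀ x, (P x).IsHermitian) ∧ (∀ x, P x * P x = P x) ∧
    (∀ x y, x ≠ y → P x * P y = 0) ∧ ∑ x, P x = 1

section StarAlgebra

open Finset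

variable {A : Type*}

lemma AddChar.mem_unitary {G : Type*} [AddGroup G] [Monoid A] [StarMul A] (ψ : AddChar G A)
    (hψ : ∀ g, star (ψ g) = ψ (-g)) (g : G) : ψ g ∈ unitary A := by
  refine Unitary.mem_iff.2 ⟨?_, ?_⟩ <;> rw [hψ, ← AddChar.map_add_eq_mul] <;> simp

lemma AddChar.isStarProjection_average {G : Type*} [AddCommGroup G] [Fintype G] [Ring A]
    [StarRing A] [Algebra ℂ A] [StarModule ℂ A] (ψ : AddChar G A)
    (hψ : ∀ g, star (ψ g) = ψ (-g)) :
    IsStarProjection ((Fintype.card G : ℂ)⁻¹ • ∑ g, ψ g) := by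
  have hshift : ∀ g, ψ g * ∑ h, ψ h = ∑ h, ψ h := fun g => by
    rw [Finset.mul_sum]
    exact Fintype.sum_equiv (Equiv.addLeft g) _ _ fun h => (ψ.map_add_eq_mul g h).symm
  refine ⟨?_, ?_⟩
  · rw [IsIdempotentElem, smul_mul_smul_comm, Finset.sum_mul]
    simp_rw [hshift, Finset.sum_const, Finset.card_univ, ← Nat.cast_smul_eq_nsmul ℂ, smul_smul]
    congr 1
    field_simp
  · rw [IsSelfAdjoint, star_smul, star_sum]
    simp_rw [hψ]
    rw [Fintype.sum_equiv (Equiv.neg G) (fun g => ψ (-g)) ψ fun g => rfl]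
    simp

variable [NormedRing A] [StarRing A] [CStarRing A]

lemma IsStarProjection.norm_mul_sq {P Q : A} (hP : IsStarProjection P) (hQ : IsSelfAdjoint Q) :
    ‖P * Q‖ ^ 2 = ‖Q * P * Q‖ := by
  rw [sq, ← CStarRing.norm_star_mul_self, star_mul, hP.isSelfAdjoint.star_eq, hQ.star_eq,
    mul_assoc, ← mul_assoc P, hP.isIdempotentElem.eq, mul_assoc]

lemma norm_mul_sq_le_of_eq_smul_sum [NormedAlgebra ℂ A] {P Q : A} (hP : IsStarProjection P)
    (hQ : IsStarProjection Q) {ι : Type*} (s : Finset ι) (c : ℂ) (a : ι → A)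
    (ha : ∀ i, a i ∈ unitary A) (hPa : P = c • ∑ i ∈ s, a i) :
    ‖P * Q‖ ^ 2 ≤ ‖c‖ * #{i ∈ s | Q * a i * Q ≠ 0} := by
  have hterm : ∀ i, ‖Q * a i * Q‖ ≤ if Q * a i * Q ≠ 0 then 1 else 0 := fun i => by
    split_ifs with h
    · calc ‖Q * a i * Q‖ ≤ ‖Q * a i‖ * ‖Q‖ := norm_mul_le _ _
        _ = ‖Q‖ * ‖Q‖ := by rw [CStarRing.norm_mul_mem_unitary _ (ha i)]
        _ ≤ 1 := mul_le_one₀ (hQ.norm_le Q) (norm_nonneg Q) (hQ.norm_le Q)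
    · rw [not_not.1 h, norm_zero]
  rw [hP.norm_mul_sq hQ.isSelfAdjoint, hPa, mul_smul_comm, smul_mul_assoc, norm_smul,
    Finset.mul_sum, Finset.sum_mul, ← Finset.sum_boole]
  gcongr
  exact (norm_sum_le _ _).trans (Finset.sum_le_sum fun i _ => hterm i)

end StarAlgebra

namespace Matrix

variable {R ι l m n p : Type*} [CommSemiring R]

lemma sum_kronecker (s : Finset ι) (A : ι → Matrix l m R) (B : Matrix n p R) :
    (∑ i ∈ s, A i) ⊗ₖ B = ∑ i ∈ s, A i ⊗ₖ B := by
  ext; simp [sum_apply, Finset.sum_mul]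

lemma kronecker_sum (s : Finset ι) (A : Matrix l m R) (B : ι → Matrix n p R) :
    A ⊗ₖ (∑ i ∈ s, B i) = ∑ i ∈ s, A ⊗ₖ B i := by
  ext; simp [sum_apply, Finset.mul_sum]

lemma sum_kronecker_mul_kronecker_mul_sum [Fintype ι] [Fintype m] [Fintype p]
    (A : ι → Matrix m m R) (B : ι → Matrix p p R) (M : Matrix m m R) (N : Matrix p p R)
    (hB : ∀ i j, i ≠ j → B i * N * B j = 0) :
    (∑ i, A i ⊗ₖ B i) * (M ⊗ₖ N) * (∑ i, A i ⊗ₖ B i) =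
      ∑ i, (A i * M * A i) ⊗ₖ (B i * N * B i) := by
  simp_rw [Finset.sum_mul, Finset.mul_sum, ← mul_kronecker_mul]
  refine Finset.sum_congr rfl fun i _ => Fintype.sum_eq_single i fun j hj => ?_
  rw [hB i j (Ne.symm hj), kronecker_zero]

end Matrix

def AddChar.kronecker {R G m p : Type*} [CommSemiring R] [AddMonoid G] [Fintype m]
    [DecidableEq m] [Fintype p] [DecidableEq p] (ψ : AddChar G (Matrix m m R))
    (φ : AddChar G (Matrix p p R)) : AddChar G (Matrix (m × p) (m × p) R) where
  toFun g := ψ g ⊗ₖ φ g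
  map_zero_eq_one' := by simp
  map_add_eq_mul' g h := by simp [AddChar.map_add_eq_mul, Matrix.mul_kronecker_mul]

lemma AddChar.star_kronecker_apply {R G m p : Type*} [CommSemiring R] [StarRing R]
    [AddMonoid G] [Fintype m] [DecidableEq m] [Fintype p] [DecidableEq p]
    {ψ : AddChar G (Matrix m m R)} {φ : AddChar G (Matrix p p R)} {g g' : G} (hψ : star (ψ g) = ψ g') (hφ : star (φ g) = φ g') :
    star (ψ.kronecker φ g) = ψ.kronecker φ g' := by
  simp only [AddChar.kronecker, AddChar.coe_mk, Matrix.star_eq_conjTranspose,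
    Matrix.conjTranspose_kronecker] at *
  rw [hψ, hφ]

lemma IsStarProjection.kronecker {R m p : Type*} [CommSemiring R] [StarRing R] [Fintype m]
    [Fintype p] {A : Matrix m m R} {B : Matrix p p R} (hA : IsStarProjection A) (hB : IsStarProjection B) :
    IsStarProjection (A ⊗ₖ B) := by
  refine ⟨?_, ?_⟩
  · rw [IsIdempotentElem, ← Matrix.mul_kronecker_mul, hA.isIdempotentElem.eq,
      hB.isIdempotentElem.eq]
  · rw [IsSelfAdjoint, Matrix.star_eq_conjTranspose, Matrix.conjTranspose_kronecker,
      ← Matrix.star_eq_conjTranspose, ← Matrix.star_eq_conjTranspose, hA.isSelfAdjoint.star_eq,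
      hB.isSelfAdjoint.star_eq]

lemma Matrix.isStarProjection_sum_kronecker {R ι m p : Type*} [CommSemiring R] [StarRing R]
    [Fintype ι] [Fintype m] [DecidableEq m] [Fintype p] [DecidableEq p] {A : ι → Matrix m m R}
    {B : ι → Matrix p p R}
    (hA : ∀ i, IsStarProjection (A i)) (hB : ∀ i, IsStarProjection (B i))
    (hAB : ∀ i j, i ≠ j → B i * B j = 0) : IsStarProjection (∑ i, A i ⊗ₖ B i) := by
  refine ⟨?_, isSelfAdjoint_sum _ fun i _ => ((hA i).kronecker (hB i)).isSelfAdjoint⟩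
  have h := sum_kronecker_mul_kronecker_mul_sum A B 1 1 fun i j hij => by
    rw [mul_one, hAB i j hij]
  rw [one_kronecker_one, mul_one] at h
  simp_rw [mul_one, (hA _).isIdempotentElem.eq, (hB _).isIdempotentElem.eq] at h
  exact h

namespace IsPVM

variable {ι X : Type*} [Fintype ι] [DecidableEq ι] [Fintype X] {C : X → Matrix ι ι ℂ}

lemma isStarProjection (hC : IsPVM C) (x : X) : IsStarProjection (C x) :=
  ⟨hC.2.1 x, (hC.1 x).isSelfAdjoint⟩

lemma sum_smul_mul_sum_smul (hC : IsPVM C) (f g : X → ℂ) :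
    (∑ x, f x • C x) * (∑ x, g x • C x) = ∑ x, (f x * g x) • C x := by
  simp_rw [Finset.sum_mul, Finset.mul_sum, smul_mul_smul_comm]
  refine Finset.sum_congr rfl fun x _ => ?_
  rw [Fintype.sum_eq_single x fun y hy => by rw [hC.2.2.1 x y (Ne.symm hy), smul_zero], hC.2.1]

lemma star_sum_smul (hC : IsPVM C) (f : X → ℂ) :
    star (∑ x, f x • C x) = ∑ x, star (f x) • C x := by
  simp_rw [star_sum, star_smul, Matrix.star_eq_conjTranspose, (hC.1 _).eq]

def addChar {G : Type*} [AddMonoid G] (hC : IsPVM C) (χ : X → AddChar G ℂ) :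
    AddChar G (Matrix ι ι ℂ) where
  toFun g := ∑ x, χ x g • C x
  map_zero_eq_one' := by simpa using hC.2.2.2
  map_add_eq_mul' g h := by simp_rw [hC.sum_smul_mul_sum_smul, AddChar.map_add_eq_mul]

lemma star_addChar_apply {G : Type*} [AddGroup G] (hC : IsPVM C) {χ : X → AddChar G ℂ}
    (hχ : ∀ x g, star (χ x g) = χ x (-g)) (g : G) : star (hC.addChar χ g) = hC.addChar χ (-g) := by
  simp only [addChar, AddChar.coe_mk, hC.star_sum_smul, hχ]

end IsPVM

section TranslationRep

variable {E : Type*} [AddCommGroup E] [Fintype E] [DecidableEq E]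

def translationRep : AddChar E (Matrix E E ℂ) where
  toFun t := (Equiv.addRight t).permMatrix ℂ
  map_zero_eq_one' := by simp
  map_add_eq_mul' s t := by rw [Equiv.addRight_add, Matrix.permMatrix_mul]

lemma translationRep_apply (t v v' : E) : translationRep t v v' = if v + t = v' then 1 else 0 := by
  simp [translationRep, PEquiv.toMatrix_apply]

lemma star_translationRep (t : E) : star (translationRep t) = translationRep (-t) := by
  simp [translationRep, Matrix.star_eq_conjTranspose, Matrix.conjTranspose_permMatrix]

end TranslationRep

lemma SetLike.sum_ite_coe_eq {S α M : Type*} [SetLike S α] [AddCommMonoid M] [DecidableEq α]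
    (s : S) [Fintype s] (a : α) (f : α → M) :
    ∑ u : s, (if (u : α) = a then f u else 0) = if a ∈ s then f a else 0 := by
  by_cases ha : a ∈ s
  · rw [Fintype.sum_eq_single ⟨a, ha⟩ fun u hu => if_neg fun h => hu (Subtype.ext h)]
    simp [ha]
  · refine (Finset.sum_eq_zero fun (u : s) _ => if_neg fun (h : (u : α) = a) => ?_).trans
      (if_neg ha).symm
    exact ha (h ▸ u.2)

section BinaryVectorSpace

open Module

variable {n : ℕ}

def signChar (z : Fin n → ZMod 2) : AddChar (Fin n → ZMod 2) ℂ where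
  toFun v := (-1) ^ (dotProduct z v).val
  map_zero_eq_one' := by simp
  map_add_eq_mul' u v := by
    rw [dotProduct_add, ZMod.val_add, ← pow_add, neg_one_pow_eq_pow_mod_two (R := ℂ) (_ + _)]

lemma signChar_apply (z v : Fin n → ZMod 2) : signChar z v = (-1) ^ (dotProduct z v).val := rfl

lemma signChar_comm (z v : Fin n → ZMod 2) : signChar z v = signChar v z := by
  rw [signChar_apply, signChar_apply, dotProduct_comm]

lemma signChar_neg (z v : Fin n → ZMod 2) : signChar z (-v) = signChar z v := by
  rw [signChar_apply, signChar_apply, dotProduct_neg, ZMod.neg_eq_self_mod_two]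

lemma star_signChar (z v : Fin n → ZMod 2) : star (signChar z v) = signChar z v := by
  simp [signChar_apply]

-- `0` is the trivial character of `AddChar`.
lemma signChar_eq_zero_iff {z : Fin n → ZMod 2} : signChar z = 0 ↔ z = 0 := by
  refine ⟨fun h => funext fun i => ?_, fun h => by ext v; simp [h, signChar_apply]⟩
  have hi := DFunLike.congr_fun h (Pi.single i 1)
  rw [AddChar.zero_apply, signChar_apply, dotProduct_single, mul_one] at hi
  rcases (by decide : ∀ a : ZMod 2, a = 0 ∨ a = 1) (z i) with h0 | h1
  · exact h0
  · norm_num [h1, show (1 : ZMod 2).val = 1 from rfl] at hi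

namespace IsCosetReps

variable {W : Submodule (ZMod 2) (Fin n → ZMod 2)} {T : Set (Fin n → ZMod 2)}

lemma sum_ite_sub_mem {M : Type*} [AddCommMonoid M] (hT : IsCosetReps W T)
    (v : Fin n → ZMod 2) (c : M) : ∑ x : T, (if v - x ∈ W then c else 0) = c := by
  obtain ⟨x, ⟨hxT, hx⟩, huniq⟩ := hT v
  rw [Fintype.sum_eq_single ⟨x, hxT⟩ fun y hy =>
    if_neg fun h => hy (Subtype.ext (huniq y ⟨y.2, h⟩)), if_pos hx]

noncomputable def addEquiv (hT : IsCosetReps W T) : T × W ≃ (Fin n → ZMod 2) :=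
  Equiv.ofBijective (fun p => p.1 + p.2) <| by
    refine ⟨fun ⟨a, u⟩ ⟨b, w⟩ h => ?_, fun v => ?_⟩
    · have hab : (a : Fin n → ZMod 2) = b := (hT (a + u)).unique ⟨a.2, by simp⟩
        ⟨b.2, by simp [show (a : Fin n → ZMod 2) + u = b + w from h]⟩
      simp only at h
      rw [hab, add_right_inj] at h
      exact Prod.ext (Subtype.ext hab) (Subtype.ext h)
    · obtain ⟨x, ⟨hxT, hx⟩, -⟩ := hT v
      exact ⟨(⟨x, hxT⟩, ⟨v - x, hx⟩), add_sub_cancel _ _⟩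

lemma card_smul_sum {M : Type*} [AddCommMonoid M] (hT : IsCosetReps W T)
    (f : (Fin n → ZMod 2) → M) (hf : ∀ v, ∀ u ∈ W, f (v + u) = f v) :
    Fintype.card W • ∑ x : T, f x = ∑ v, f v := by
  rw [← Fintype.sum_equiv hT.addEquiv (fun p => f (p.1 + p.2)) f fun _ => rfl,
    Fintype.sum_prod_type, Finset.smul_sum]
  simp [hf _ _ (Subtype.prop _)]

end IsCosetReps

lemma finrank_add_finrank_dualSpace (W : Submodule (ZMod 2) (Fin n → ZMod 2)) :
    finrank (ZMod 2) W + finrank (ZMod 2) (dualSpace W) = n := by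
  have h : dualSpace W =
      W.dualAnnihilator.comap (dotProductEquiv (ZMod 2) (Fin n)).toLinearMap := by
    ext y
    simp [dualSpace, Submodule.mem_dualAnnihilator, dotProduct_comm y]
  rw [h, Submodule.comap_equiv_eq_map_symm, LinearEquiv.finrank_map_eq,
    Subspace.finrank_add_finrank_dualAnnihilator_eq, finrank_fin_fun]

lemma sum_signChar_dualReps {W : Submodule (ZMod 2) (Fin n → ZMod 2)} {T : Set (Fin n → ZMod 2)}
    (hT : IsCosetReps (dualSpace W) T) {w : Fin n → ZMod 2} (hw : w ∈ W) :
    ∑ z : T, signChar w z = if w = 0 then 2 ^ finrank (ZMod 2) W else 0 := by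
  -- `|W^⊥| · ∑_{z ∈ T} χ_w(z) = ∑_{v ∈ 𝔽₂ⁿ} χ_w(v)`, then character orthogonality and
  -- `|W| · |W^⊥| = 2ⁿ`.
  have hsum := hT.card_smul_sum (signChar w) fun v u hu => by
    rw [AddChar.map_add_eq_mul, signChar_apply w u, hu w hw, ZMod.val_zero, pow_zero, mul_one]
  have h2n : (2 : ℂ) ^ n = 2 ^ finrank (ZMod 2) W * 2 ^ finrank (ZMod 2) (dualSpace W) := by
    rw [← pow_add, finrank_add_finrank_dualSpace]
  simp only [AddChar.sum_eq_ite, signChar_eq_zero_iff] at hsum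
  rw [Module.card_eq_pow_finrank (K := ZMod 2), ZMod.card, nsmul_eq_mul, Fintype.card_fun,
    ZMod.card, Fintype.card_fin] at hsum
  push_cast at hsum
  split_ifs at hsum ⊢
  · rw [h2n, mul_comm] at hsum
    exact mul_right_cancel₀ (pow_ne_zero _ two_ne_zero) hsum
  · exact (mul_eq_zero.1 hsum).resolve_left (pow_ne_zero _ two_ne_zero)

noncomputable def cosetProj (W : Submodule (ZMod 2) (Fin n → ZMod 2)) (x : Fin n → ZMod 2) :
    Matrix (Fin n → ZMod 2) (Fin n → ZMod 2) ℂ :=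
  Matrix.diagonal fun v => if v - x ∈ W then 1 else 0

lemma isStarProjection_cosetProj (W : Submodule (ZMod 2) (Fin n → ZMod 2)) (x : Fin n → ZMod 2) :
    IsStarProjection (cosetProj W x) := by
  refine ⟨?_, ?_⟩
  · rw [IsIdempotentElem, cosetProj, Matrix.diagonal_mul_diagonal]
    congr 1; ext v; by_cases h : v - x ∈ W <;> simp [h]
  · rw [IsSelfAdjoint, cosetProj, Matrix.star_eq_conjTranspose, Matrix.diagonal_conjTranspose]
    congr 1; ext v; by_cases h : v - x ∈ W <;> simp [h]

lemma cosetProj_mul_translationRep_mul_cosetProj {W : Submodule (ZMod 2) (Fin n → ZMod 2)}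
    {t : Fin n → ZMod 2} (ht : t ∉ W) (x : Fin n → ZMod 2) :
    cosetProj W x * translationRep t * cosetProj W x = 0 := by
  ext v v'
  simp only [cosetProj, Matrix.diagonal_mul, Matrix.mul_diagonal, translationRep_apply,
    Matrix.zero_apply]
  split_ifs with hv hvv' hv' <;> try simp
  refine ht ?_
  rw [show t = (v' - x) - (v - x) by rw [← hvv']; abel]
  exact W.sub_mem hv' hv

lemma cosetVec_apply (W : Submodule (ZMod 2) (Fin n → ZMod 2)) (x z v : Fin n → ZMod 2) :
    cosetVec W x z v =
      if v - x ∈ W then (((√2 : ℝ) : ℂ) ^ finrank (ZMod 2) W)⁻¹ * signChar z (v - x) else 0 := by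
  have h : ∀ u : W, v = x + u ↔ (u : Fin n → ZMod 2) = v - x := fun u => by
    rw [eq_sub_iff_add_eq', eq_comm]
  simp only [cosetVec, Pi.smul_apply, Finset.sum_apply, Pi.single_apply, smul_eq_mul, mul_ite,
    mul_one, mul_zero, h, ← signChar_apply]
  rw [SetLike.sum_ite_coe_eq W (v - x) (signChar z)]
  split_ifs <;> simp_all

lemma outerMat_cosetVec_apply (W : Submodule (ZMod 2) (Fin n → ZMod 2))
    (x z v v' : Fin n → ZMod 2) :
    outerMat (cosetVec W x z) (cosetVec W x z) v v' =
      if v - x ∈ W ∧ v' - x ∈ W then ((2 : ℂ) ^ finrank (ZMod 2) W)⁻¹ * signChar z (v' - v)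
      else 0 := by
  have hχ : signChar z (v' - v) = signChar z (v - x) * signChar z (v' - x) := by
    rw [show v' - v = (v' - x) + -(v - x) by abel, AddChar.map_add_eq_mul, signChar_neg, mul_comm]
  have hc : (((√2 : ℝ) : ℂ) ^ finrank (ZMod 2) W)⁻¹ * star (((√2 : ℝ) : ℂ) ^ finrank (ZMod 2) W)⁻¹
      = ((2 : ℂ) ^ finrank (ZMod 2) W)⁻¹ := by
    rw [star_inv₀, star_pow, Complex.star_def, Complex.conj_ofReal, ← mul_inv, ← mul_pow,
      ← Complex.ofReal_mul, Real.mul_self_sqrt zero_le_two, Complex.ofReal_ofNat]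
  rw [outerMat, Matrix.of_apply, cosetVec_apply, cosetVec_apply]
  by_cases h : v - x ∈ W <;> by_cases h' : v' - x ∈ W <;> simp only [h, h', if_true, if_false,
    and_true, and_false, zero_mul, map_zero, mul_zero]
  rw [hχ, ← hc, ← Complex.star_def, star_mul', star_signChar]
  ring

lemma sum_outerMat_cosetVec_reps {V : Submodule (ZMod 2) (Fin n → ZMod 2)}
    {T : Set (Fin n → ZMod 2)} (hT : IsCosetReps V T) (z : Fin n → ZMod 2) :
    ∑ x : T, outerMat (cosetVec V x z) (cosetVec V x z) =
      ((2 : ℂ) ^ finrank (ZMod 2) V)⁻¹ •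
        ∑ t : V, signChar z t • translationRep (t : Fin n → ZMod 2) := by
  ext v v'
  have hmem : ∀ x : Fin n → ZMod 2, v - x ∈ V → (v' - x ∈ V ↔ v' - v ∈ V) := fun x hx => by
    rw [show v' - x = (v' - v) + (v - x) by abel, V.add_mem_iff_left hx]
  have htrans : ∀ t : V, v + t = v' ↔ (t : Fin n → ZMod 2) = v' - v := fun t =>
    eq_sub_iff_add_eq'.symm
  simp only [Matrix.sum_apply, Matrix.smul_apply, outerMat_cosetVec_apply, translationRep_apply,
    smul_eq_mul, mul_ite, mul_one, mul_zero, htrans]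
  rw [SetLike.sum_ite_coe_eq V (v' - v) (signChar z)]
  refine (Finset.sum_congr rfl fun x _ => ?_).trans (hT.sum_ite_sub_mem v _)
  by_cases hx : v - x ∈ V
  · simp only [hx, hmem x hx, true_and, if_true, mul_ite, mul_zero]
  · simp [hx]

lemma sum_outerMat_cosetVec_dualReps {W : Submodule (ZMod 2) (Fin n → ZMod 2)}
    {T : Set (Fin n → ZMod 2)} (hT : IsCosetReps (dualSpace W) T) (x : Fin n → ZMod 2) :
    ∑ z : T, outerMat (cosetVec W x z) (cosetVec W x z) = cosetProj W x := by
  ext v v'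
  simp only [Matrix.sum_apply, outerMat_cosetVec_apply, cosetProj, Matrix.diagonal_apply]
  by_cases h : v - x ∈ W ∧ v' - x ∈ W
  · have hw : v' - v ∈ W := by
      rw [show v' - v = (v' - x) - (v - x) by abel]
      exact W.sub_mem h.2 h.1
    simp_rw [if_pos h, ← Finset.mul_sum, signChar_comm _ (v' - v)]
    rw [sum_signChar_dualReps hT hw, if_pos h.1]
    by_cases hvv : v = v'
    · simp [hvv]
    · simp [hvv, sub_eq_zero, Ne.symm hvv]
  · rw [Finset.sum_eq_zero fun z _ => if_neg h]
    split_ifs with hvv hv <;> simp_all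

end BinaryVectorSpace

section CosetMeasurements

open Finset Module

variable {n : ℕ}

noncomputable def PV {ιC : Type*} (V : Submodule (ZMod 2) (Fin n → ZMod 2))
    (TV TVp : Set (Fin n → ZMod 2)) (ιB : Type*) (C : TVp → Matrix ιC ιC ℂ) :
    Matrix ((Fin n → ZMod 2) × ιB × ιC) ((Fin n → ZMod 2) × ιB × ιC) ℂ :=
  ∑ x : TV, ∑ z : TVp, outerMat (cosetVec V x z) (cosetVec V x z) ⊗ₖ ((1 : Matrix ιB ιB ℂ) ⊗ₖ C z)

noncomputable def QW {ιB : Type*} (W : Submodule (ZMod 2) (Fin n → ZMod 2))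
    (TW TWp : Set (Fin n → ZMod 2)) (ιC : Type*) (B : TW → Matrix ιB ιB ℂ) :
    Matrix ((Fin n → ZMod 2) × ιB × ιC) ((Fin n → ZMod 2) × ιB × ιC) ℂ :=
  ∑ x : TW, ∑ z : TWp, outerMat (cosetVec W x z) (cosetVec W x z) ⊗ₖ (B x ⊗ₖ (1 : Matrix ιC ιC ℂ))

noncomputable def PVRep {ιC : Type*} [Fintype ιC] {TVp : Set (Fin n → ZMod 2)}
    {C : TVp → Matrix ιC ιC ℂ} (hC : IsPVM C) (ιB : Type*) [Fintype ιB] :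
    AddChar (Fin n → ZMod 2) (Matrix ((Fin n → ZMod 2) × ιB × ιC) ((Fin n → ZMod 2) × ιB × ιC) ℂ) :=
  translationRep.kronecker ((1 : AddChar _ (Matrix ιB ιB ℂ)).kronecker
    (hC.addChar fun z => signChar z))

variable {ιB ιC : Type*} {V W : Submodule (ZMod 2) (Fin n → ZMod 2)}
  {TV TW TVp TWp : Set (Fin n → ZMod 2)} {C : TVp → Matrix ιC ιC ℂ} {B : TW → Matrix ιB ιB ℂ}

lemma QW_eq_sum (hTWp : IsCosetReps (dualSpace W) TWp) :
    QW W TW TWp ιC B = ∑ x : TW, cosetProj W x ⊗ₖ (B x ⊗ₖ (1 : Matrix ιC ιC ℂ)) := by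
  simp_rw [QW, ← Matrix.sum_kronecker, sum_outerMat_cosetVec_dualReps hTWp]

lemma card_filter_coe_mem (V W : Submodule (ZMod 2) (Fin n → ZMod 2)) :
    #{t : V | (t : Fin n → ZMod 2) ∈ W} = 2 ^ finrank (ZMod 2) ↥(V ⊓ W) := by
  rw [← Fintype.card_subtype, Fintype.card_congr <|
    (Equiv.subtypeSubtypeEquivSubtypeInter (· ∈ V) (· ∈ W)).trans
      (Equiv.subtypeEquivRight fun _ => Submodule.mem_inf.symm),
    Module.card_eq_pow_finrank (K := ZMod 2), ZMod.card]

variable [Fintype ιB] [Fintype ιC]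

lemma star_PVRep (hC : IsPVM C) (t : Fin n → ZMod 2) :
    star (PVRep hC ιB t) = PVRep hC ιB (-t) :=
  AddChar.star_kronecker_apply (star_translationRep t) <| AddChar.star_kronecker_apply (by simp) <|
    hC.star_addChar_apply (fun z t => by rw [star_signChar, signChar_neg]) t

lemma PV_eq_smul_sum (hTV : IsCosetReps V TV) (hC : IsPVM C) :
    PV V TV TVp ιB C = ((2 : ℂ) ^ finrank (ZMod 2) V)⁻¹ • ∑ t : V, PVRep hC ιB t := by
  rw [PV, Finset.sum_comm]
  simp_rw [← Matrix.sum_kronecker, sum_outerMat_cosetVec_reps hTV, Matrix.smul_kronecker,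
    Matrix.sum_kronecker, ← Finset.smul_sum, Matrix.smul_kronecker]
  rw [Finset.sum_comm]
  simp [PVRep, AddChar.kronecker, IsPVM.addChar, Matrix.kronecker_sum, Matrix.kronecker_smul]

lemma isStarProjection_PV (hTV : IsCosetReps V TV) (hC : IsPVM C) :
    IsStarProjection (PV V TV TVp ιB C) := by
  have hcard : (Fintype.card V : ℂ) = 2 ^ finrank (ZMod 2) V := by
    rw [Module.card_eq_pow_finrank (K := ZMod 2), ZMod.card]; push_cast; rfl
  rw [PV_eq_smul_sum hTV hC, ← hcard]
  exact ((PVRep hC ιB).compAddMonoidHom V.subtype.toAddMonoidHom).isStarProjection_average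
    fun t => star_PVRep hC t

lemma isStarProjection_QW (hTWp : IsCosetReps (dualSpace W) TWp) (hB : IsPVM B) :
    IsStarProjection (QW W TW TWp ιC B) := by
  rw [QW_eq_sum hTWp]
  refine Matrix.isStarProjection_sum_kronecker (fun x => isStarProjection_cosetProj W x)
    (fun x => (hB.isStarProjection x).kronecker (.one _)) fun x y hxy => ?_
  rw [← Matrix.mul_kronecker_mul, hB.2.2.1 x y hxy, Matrix.zero_kronecker]

lemma QW_mul_PVRep_mul_QW_eq_zero (hTWp : IsCosetReps (dualSpace W) TWp) (hB : IsPVM B)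
    (hC : IsPVM C) {t : Fin n → ZMod 2} (ht : t ∉ W) :
    QW W TW TWp ιC B * PVRep hC ιB t * QW W TW TWp ιC B = 0 := by
  rw [QW_eq_sum hTWp, PVRep, AddChar.kronecker, AddChar.coe_mk,
    Matrix.sum_kronecker_mul_kronecker_mul_sum]
  · simp [cosetProj_mul_translationRep_mul_cosetProj ht]
  · intro x y hxy
    simp [AddChar.kronecker, ← Matrix.mul_kronecker_mul, hB.2.2.1 x y hxy]

lemma card_QW_mul_PVRep_mul_QW_ne_zero_le (hTWp : IsCosetReps (dualSpace W) TWp)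
    (hB : IsPVM B) (hC : IsPVM C) :
    #{t : V | QW W TW TWp ιC B * PVRep hC ιB t * QW W TW TWp ιC B ≠ 0} ≤
      2 ^ finrank (ZMod 2) ↥(V ⊓ W) :=
  card_filter_coe_mem V W ▸ card_le_card (monotone_filter_right _
    fun _ _ ht => by_contra fun h => ht (QW_mul_PVRep_mul_QW_eq_zero hTWp hB hC h))

end CosetMeasurements

theorem norm_PV_mul_QW_le_general {n k : ℕ} {ιB ιC : Type*} [Fintype ιB] [Fintype ιC]
    (V W : Submodule (ZMod 2) (Fin n → ZMod 2))
    (hV : Module.finrank (ZMod 2) V = k)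
    (TV TW TVp TWp : Set (Fin n → ZMod 2))
    (hTV : IsCosetReps V TV)
    (hTWp : IsCosetReps (dualSpace W) TWp)
    (C : TVp → Matrix ιC ιC ℂ) (hC : IsPVM C)
    (B : TW → Matrix ιB ιB ℂ) (hB : IsPVM B) :
    ‖(∑ x : TV, ∑ z : TVp,
          (outerMat (cosetVec V (x : Fin n → ZMod 2) (z : Fin n → ZMod 2))
            (cosetVec V (x : Fin n → ZMod 2) (z : Fin n → ZMod 2))) ⊗ₖ
            ((1 : Matrix ιB ιB ℂ) ⊗ₖ C z)) *
        (∑ x : TW, ∑ z : TWp,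
          (outerMat (cosetVec W (x : Fin n → ZMod 2) (z : Fin n → ZMod 2))
            (cosetVec W (x : Fin n → ZMod 2) (z : Fin n → ZMod 2))) ⊗ₖ
            (B x ⊗ₖ (1 : Matrix ιC ιC ℂ)))‖ ≤
      Real.sqrt ((2 : ℝ) ^ ((Module.finrank (ZMod 2) ↥(V ⊓ W) : ℤ) - (k : ℤ))) := by
  change ‖PV V TV TVp ιB C * QW W TW TWp ιC B‖ ≤ _
  have hsq := norm_mul_sq_le_of_eq_smul_sum (isStarProjection_PV hTV hC)
    (isStarProjection_QW hTWp hB) Finset.univ _ (fun t : V => PVRep hC ιB t)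
    (fun t => (PVRep hC ιB).mem_unitary (star_PVRep hC) t) (PV_eq_smul_sum hTV hC)
  rw [Real.le_sqrt (norm_nonneg _) (by positivity), zpow_sub₀ two_ne_zero, zpow_natCast,
    zpow_natCast, ← hV, div_eq_inv_mul]
  refine hsq.trans ?_
  rw [norm_inv, norm_pow, Complex.norm_ofNat]
  gcongr
  exact_mod_cast card_QW_mul_PVRep_mul_QW_ne_zero_le hTWp hB hC

/-- For `V, W ∈ Gr₂(n,k)`, a PVM `{C_z^V}_{z ∈ CS(V^⊥)}` on `H_C` and a PVM
`{B_x^W}_{x ∈ CS(W)}` on `H_B`, the operators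
`P^V = ∑_{x,z} |V_{x,z}⟩⟨V_{x,z}| ⊗ Id_B ⊗ C_z^V` and
`Q^W = ∑_{x,z} |W_{x,z}⟩⟨W_{x,z}| ⊗ B_x^W ⊗ Id_C`
on `(ℂ²)^{⊗n} ⊗ H_B ⊗ H_C` satisfy `‖P^V Q^W‖ ≤ √(2^{dim(V ∩ W) - k})`. -/
theorem norm_PV_mul_QW_le {n k : ℕ} {ιB ιC : Type*} [Fintype ιB] [Fintype ιC]
    (V W : Submodule (ZMod 2) (Fin n → ZMod 2))
    (hV : Module.finrank (ZMod 2) V = k) (hW : Module.finrank (ZMod 2) W = k)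
    (TV TW TVp TWp : Set (Fin n → ZMod 2))
    (hTV : IsCosetReps V TV) (hTW : IsCosetReps W TW)
    (hTVp : IsCosetReps (dualSpace V) TVp) (hTWp : IsCosetReps (dualSpace W) TWp)
    (C : TVp → Matrix ιC ιC ℂ) (hC : IsPVM C)
    (B : TW → Matrix ιB ιB ℂ) (hB : IsPVM B) :
    ‖(∑ x : TV, ∑ z : TVp,
          (outerMat (cosetVec V (x : Fin n → ZMod 2) (z : Fin n → ZMod 2))
            (cosetVec V (x : Fin n → ZMod 2) (z : Fin n → ZMod 2))) ⊗ₖ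
            ((1 : Matrix ιB ιB ℂ) ⊗ₖ C z)) *
        (∑ x : TW, ∑ z : TWp,
          (outerMat (cosetVec W (x : Fin n → ZMod 2) (z : Fin n → ZMod 2))
            (cosetVec W (x : Fin n → ZMod 2) (z : Fin n → ZMod 2))) ⊗ₖ
            (B x ⊗ₖ (1 : Matrix ιC ιC ℂ)))‖ ≤
      Real.sqrt ((2 : ℝ) ^ ((Module.finrank (ZMod 2) ↥(V ⊓ W) : ℤ) - (k : ℤ))) :=
  norm_PV_mul_QW_le_general V W hV TV TW TVp TWp hTV hTWp C hC B hB
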